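/- (A classical solution of the coupled model satisfies the quasi-weak formulation Problem EC.) Let Ω₁ = (0,1)×(0,1), Ω₂ = (1,2)×(0,1), Γ = {1}×[0,1]. Let c₁, c₂ > 0 be constants, let β₁, β₂ : ℝ² → ℝ be C¹ and f₁, f₂, g₁, g₂ : ℝ² → ℝ be continuous on neighborhoods of the closures of Ω₁, Ω₂ respectively, and let u₁, u₂ : ℝ² → ℝ be C² on neighborhoods of the closures of Ω₁, Ω₂ satisfying: c₁ g₁ − div(β₁ ∇u₁) = f₁ on Ω₁; c₂ g₂ − div(β₂ ∇u₂) = f₂ on Ω₂; and the Neumann interface condition β₁(1,y) ∂₁u₁(1,y) = β₂(1,y) ∂₁u₂(1,y) for all y ∈ [0,1]. Then for all test functions v₁, v₂ : ℝ² → ℝ that are C¹ on neighborhoods of the closures of Ω₁, Ω₂ and vanish on ∂Ω₁ \ Γ and ∂Ω₂ \ Γ respectively (with NO matching condition on Γ), one has c₁∫_{Ω₁} g₁ v₁ + ∫_{Ω₁} β₁ ∇u₁·∇v₁ + c₂∫_{Ω₂} g₂ v₂ + ∫_{Ω₂} β₂ ∇u₂·∇v₂ = ∫_{Ω₁} f₁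 v₁ + ∫_{Ω₂} f₂ v₂ + ∫₀¹ β₂(1,y) ∂₁u₂(1,y) v₁(1,y) dy − ∫₀¹ β₁(1,y) ∂₁u₁(1,y) v₂(1,y) dy. -/

import Mathlib

open MeasureTheory Set

/-- First partial derivative `∂₁ f` of a function on the plane. -/
noncomputable def pd1 (f : ℝ × ℝ → ℝ) (z : ℝ × ℝ) : ℝ := fderiv ℝ f z (1, 0)

/-- Second partial derivative `∂₂ f` of a function on the plane. -/
noncomputable def pd2 (f : ℝ × ℝ → ℝ) (z : ℝ × ℝ) : ℝ := fderiv ℝ f z (0, 1)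

/-- Divergence `div(β∇u) = ∂₁(β ∂₁u) + ∂₂(β ∂₂u)`. -/
noncomputable def divGrad (β u : ℝ × ℝ → ℝ) (z : ℝ × ℝ) : ℝ :=
  pd1 (fun w => β w * pd1 u w) z + pd2 (fun w => β w * pd2 u w) z

/-!
On each rectangle, the divergence theorem applied to the field `v β∇u` is Green's identity
`∫ div(β∇u) v + ∫ β∇u·∇v = ∮ β ∂ₙu v`; substituting the PDE expresses the weak form through the
boundary flux. The test function kills the flux through the three sides of its rectangle away
from `Γ`, and the Neumann condition lets the two remaining fluxes through `Γ` be written with the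
conormal derivative of the other subdomain.
-/

section PartialDerivatives

variable {U : Set (ℝ × ℝ)} {m n : WithTop ℕ∞}

lemma contDiffOn_pd1 {u : ℝ × ℝ → ℝ} (hU : IsOpen U) (hu : ContDiffOn ℝ n u U)
    (hmn : m + 1 ≤ n) : ContDiffOn ℝ m (pd1 u) U :=
  (hu.fderiv_of_isOpen hU hmn).clm_apply contDiffOn_const

lemma contDiffOn_pd2 {u : ℝ × ℝ → ℝ} (hU : IsOpen U) (hu : ContDiffOn ℝ n u U)
    (hmn : m + 1 ≤ n) : ContDiffOn ℝ m (pd2 u) U :=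
  (hu.fderiv_of_isOpen hU hmn).clm_apply contDiffOn_const

lemma continuousOn_pd1 {u : ℝ × ℝ → ℝ} (hU : IsOpen U) (hu : ContDiffOn ℝ n u U)
    (hn : 1 ≤ n) : ContinuousOn (pd1 u) U :=
  (hu.continuousOn_fderiv_of_isOpen hU hn).clm_apply continuousOn_const

lemma continuousOn_pd2 {u : ℝ × ℝ → ℝ} (hU : IsOpen U) (hu : ContDiffOn ℝ n u U)
    (hn : 1 ≤ n) : ContinuousOn (pd2 u) U :=
  (hu.continuousOn_fderiv_of_isOpen hU hn).clm_apply continuousOn_const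

variable {A B : ℝ × ℝ → ℝ} {z : ℝ × ℝ}

lemma pd1_mul (hA : DifferentiableAt ℝ A z) (hB : DifferentiableAt ℝ B z) :
    pd1 (fun w => A w * B w) z = pd1 A z * B z + A z * pd1 B z := by
  simp only [pd1, fderiv_fun_mul hA hB, add_apply, smul_apply,
    smul_eq_mul]
  ring

lemma pd2_mul (hA : DifferentiableAt ℝ A z) (hB : DifferentiableAt ℝ B z) :
    pd2 (fun w => A w * B w) z = pd2 A z * B z + A z * pd2 B z := by
  simp only [pd2, fderiv_fun_mul hA hB, add_apply, smul_apply,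
    smul_eq_mul]
  ring

lemma pd1_add_pd2_mul_flux {β u v : ℝ × ℝ → ℝ}
    (hβu₁ : DifferentiableAt ℝ (fun w => β w * pd1 u w) z)
    (hβu₂ : DifferentiableAt ℝ (fun w => β w * pd2 u w) z) (hv : DifferentiableAt ℝ v z) :
    pd1 (fun w => β w * pd1 u w * v w) z + pd2 (fun w => β w * pd2 u w * v w) z
      = divGrad β u z * v z + β z * (pd1 u z * pd1 v z + pd2 u z * pd2 v z) := by
  rw [pd1_mul hβu₁ hv, pd2_mul hβu₂ hv, divGrad]
  ring

end PartialDerivatives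

lemma intervalIntegral_eq_zero_of_forall_Icc {F : ℝ → ℝ} {a b : ℝ} (hab : a ≤ b)
    (h : ∀ x ∈ Icc a b, F x = 0) : ∫ x in a..b, F x = 0 :=
  (intervalIntegral.integral_congr (by rwa [uIcc_of_le hab])).trans
    intervalIntegral.integral_zero

section Rectangle

variable {a b c d : ℝ} {U : Set (ℝ × ℝ)}

lemma integrableOn_Ioo_prod_Ioo {F : ℝ × ℝ → ℝ} (hF : ContinuousOn F U)
    (hR : Icc a b ×ˢ Icc c d ⊆ U) : IntegrableOn F (Ioo a b ×ˢ Ioo c d) :=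
  ((hF.mono hR).integrableOn_compact (isCompact_Icc.prod isCompact_Icc)).mono_set
    (prod_mono Ioo_subset_Icc_self Ioo_subset_Icc_self)

theorem integral_Ioo_prod_Ioo_pd1_add_pd2 (hab : a ≤ b) (hcd : c ≤ d) (hU : IsOpen U)
    (hR : Icc a b ×ˢ Icc c d ⊆ U) {f g : ℝ × ℝ → ℝ} (hf : ContDiffOn ℝ 1 f U)
    (hg : ContDiffOn ℝ 1 g U) :
    ∫ z in Ioo a b ×ˢ Ioo c d, (pd1 f z + pd2 g z)
      = (((∫ x in a..b, g (x, d)) - ∫ x in a..b, g (x, c)) + ∫ y in c..d, f (b, y))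
        - ∫ y in c..d, f (a, y) := by
  have hR' : Icc (a, c) (b, d) ⊆ U := Icc_prod_Icc a b c d ▸ hR
  have hderiv : ∀ {F : ℝ × ℝ → ℝ}, ContDiffOn ℝ 1 F U →
      ∀ z ∈ Ioo a b ×ˢ Ioo c d, HasFDerivAt F (fderiv ℝ F z) z := fun hF z hz =>
    ((hF.contDiffAt (hU.mem_nhds (hR (prod_mono Ioo_subset_Icc_self Ioo_subset_Icc_self hz))))
      |>.differentiableAt one_ne_zero).hasFDerivAt
  have hae : (Ioo a b ×ˢ Ioo c d : Set (ℝ × ℝ)) =ᵐ[volume] Icc a b ×ˢ Icc c d :=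
    Measure.set_prod_ae_eq Ioo_ae_eq_Icc Ioo_ae_eq_Icc
  rw [setIntegral_congr_set hae, Icc_prod_Icc]
  exact integral_divergence_prod_Icc_of_hasFDerivAt_of_le f g (fderiv ℝ f) (fderiv ℝ g)
    (a, c) (b, d) ⟨hab, hcd⟩ (hf.continuousOn.mono hR') (hg.continuousOn.mono hR')
    (hderiv hf) (hderiv hg)
    ((((continuousOn_pd1 hU hf le_rfl).add (continuousOn_pd2 hU hg le_rfl)).mono hR')
      |>.integrableOn_compact isCompact_Icc)

variable {β u v : ℝ × ℝ → ℝ}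

theorem integral_divGrad_mul_add_flux_grad (hab : a ≤ b) (hcd : c ≤ d) (hU : IsOpen U)
    (hR : Icc a b ×ˢ Icc c d ⊆ U) (hβ : ContDiffOn ℝ 1 β U) (hu : ContDiffOn ℝ 2 u U)
    (hv : ContDiffOn ℝ 1 v U) :
    ∫ z in Ioo a b ×ˢ Ioo c d,
        (divGrad β u z * v z + β z * (pd1 u z * pd1 v z + pd2 u z * pd2 v z))
      = (((∫ x in a..b, β (x, d) * pd2 u (x, d) * v (x, d))
          - ∫ x in a..b, β (x, c) * pd2 u (x, c) * v (x, c))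
          + ∫ y in c..d, β (b, y) * pd1 u (b, y) * v (b, y))
        - ∫ y in c..d, β (a, y) * pd1 u (a, y) * v (a, y) := by
  have hβu₁ : ContDiffOn ℝ 1 (fun w => β w * pd1 u w) U :=
    hβ.mul (contDiffOn_pd1 hU hu (by norm_num))
  have hβu₂ : ContDiffOn ℝ 1 (fun w => β w * pd2 u w) U :=
    hβ.mul (contDiffOn_pd2 hU hu (by norm_num))
  rw [← integral_Ioo_prod_Ioo_pd1_add_pd2 hab hcd hU hR (hβu₁.mul hv) (hβu₂.mul hv)]
  refine setIntegral_congr_fun (measurableSet_Ioo.prod measurableSet_Ioo) fun z hz => ?_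
  have hz : U ∈ nhds z := hU.mem_nhds (hR (prod_mono Ioo_subset_Icc_self Ioo_subset_Icc_self hz))
  exact (pd1_add_pd2_mul_flux ((hβu₁.contDiffAt hz).differentiableAt one_ne_zero)
    ((hβu₂.contDiffAt hz).differentiableAt one_ne_zero)
    ((hv.contDiffAt hz).differentiableAt one_ne_zero)).symm

theorem weak_identity_of_classical_solution (κ : ℝ) {f g : ℝ × ℝ → ℝ} (hab : a ≤ b)
    (hcd : c ≤ d) (hU : IsOpen U) (hR : Icc a b ×ˢ Icc c d ⊆ U) (hβ : ContDiffOn ℝ 1 β U)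
    (hu : ContDiffOn ℝ 2 u U) (hv : ContDiffOn ℝ 1 v U) (hf : ContinuousOn f U)
    (hg : ContinuousOn g U) (hPDE : ∀ z ∈ Ioo a b ×ˢ Ioo c d, κ * g z - divGrad β u z = f z)
    (hv_bot : ∀ x ∈ Icc a b, v (x, c) = 0) (hv_top : ∀ x ∈ Icc a b, v (x, d) = 0) :
    κ * (∫ z in Ioo a b ×ˢ Ioo c d, g z * v z)
        + ∫ z in Ioo a b ×ˢ Ioo c d, β z * (pd1 u z * pd1 v z + pd2 u z * pd2 v z)
      = (∫ z in Ioo a b ×ˢ Ioo c d, f z * v z)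
        + (∫ y in c..d, β (b, y) * pd1 u (b, y) * v (b, y))
        - ∫ y in c..d, β (a, y) * pd1 u (a, y) * v (a, y) := by
  have hgreen := integral_divGrad_mul_add_flux_grad hab hcd hU hR hβ hu hv
  have htop : ∫ x in a..b, β (x, d) * pd2 u (x, d) * v (x, d) = 0 :=
    intervalIntegral_eq_zero_of_forall_Icc hab fun x hx => by rw [hv_top x hx, mul_zero]
  have hbot : ∫ x in a..b, β (x, c) * pd2 u (x, c) * v (x, c) = 0 :=
    intervalIntegral_eq_zero_of_forall_Icc hab fun x hx => by rw [hv_bot x hx, mul_zero]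
  have hgv : IntegrableOn (fun z => g z * v z) (Ioo a b ×ˢ Ioo c d) :=
    integrableOn_Ioo_prod_Ioo (hg.mul hv.continuousOn) hR
  have hfv : IntegrableOn (fun z => f z * v z) (Ioo a b ×ˢ Ioo c d) :=
    integrableOn_Ioo_prod_Ioo (hf.mul hv.continuousOn) hR
  have hgrad : IntegrableOn (fun z => β z * (pd1 u z * pd1 v z + pd2 u z * pd2 v z))
      (Ioo a b ×ˢ Ioo c d) := integrableOn_Ioo_prod_Ioo (hβ.continuousOn.mul
    (((continuousOn_pd1 hU hu (by norm_num)).mul (continuousOn_pd1 hU hv le_rfl)).add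
      ((continuousOn_pd2 hU hu (by norm_num)).mul (continuousOn_pd2 hU hv le_rfl)))) hR
  have hsplit : ∫ z in Ioo a b ×ˢ Ioo c d,
        (divGrad β u z * v z + β z * (pd1 u z * pd1 v z + pd2 u z * pd2 v z))
      = κ * (∫ z in Ioo a b ×ˢ Ioo c d, g z * v z) - (∫ z in Ioo a b ×ˢ Ioo c d, f z * v z)
        + ∫ z in Ioo a b ×ˢ Ioo c d, β z * (pd1 u z * pd1 v z + pd2 u z * pd2 v z) := by
    rw [← integral_const_mul, ← integral_sub (hgv.const_mul κ) hfv,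
      ← integral_add (f := fun z => κ * (g z * v z) - f z * v z) ((hgv.const_mul κ).sub hfv)
        hgrad]
    refine setIntegral_congr_fun (measurableSet_Ioo.prod measurableSet_Ioo) fun z hz => ?_
    rw [← hPDE z hz]
    ring
  linarith

end Rectangle

theorem classical_solution_satisfies_ProblemEC_general
    (Ω₁ Ω₂ : Set (ℝ × ℝ))
    (hΩ₁ : Ω₁ = Ioo (0:ℝ) 1 ×ˢ Ioo (0:ℝ) 1)
    (hΩ₂ : Ω₂ = Ioo (1:ℝ) 2 ×ˢ Ioo (0:ℝ) 1)
    (c₁ c₂ : ℝ)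
    (β₁ β₂ f₁ f₂ g₁ g₂ u₁ u₂ : ℝ × ℝ → ℝ)
    (U₁ U₂ : Set (ℝ × ℝ))
    (hU₁ : IsOpen U₁) (hU₁Ω : closure Ω₁ ⊆ U₁)
    (hU₂ : IsOpen U₂) (hU₂Ω : closure Ω₂ ⊆ U₂)
    (hβ₁ : ContDiffOn ℝ 1 β₁ U₁) (hβ₂ : ContDiffOn ℝ 1 β₂ U₂)
    (hf₁ : ContinuousOn f₁ U₁) (hf₂ : ContinuousOn f₂ U₂)
    (hg₁ : ContinuousOn g₁ U₁) (hg₂ : ContinuousOn g₂ U₂)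
    (hu₁ : ContDiffOn ℝ 2 u₁ U₁) (hu₂ : ContDiffOn ℝ 2 u₂ U₂)
    -- the PDEs in the two subdomains
    (hPDE₁ : ∀ z ∈ Ω₁, c₁ * g₁ z - divGrad β₁ u₁ z = f₁ z)
    (hPDE₂ : ∀ z ∈ Ω₂, c₂ * g₂ z - divGrad β₂ u₂ z = f₂ z)
    -- the Neumann interface condition β₁∇u₁·n₁ + β₂∇u₂·n₂ = 0 on Γ
    (hNeu : ∀ y ∈ Icc (0:ℝ) 1, β₁ (1, y) * pd1 u₁ (1, y) = β₂ (1, y) * pd1 u₂ (1, y)) :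
    ∀ v₁ v₂ : ℝ × ℝ → ℝ,
      ContDiffOn ℝ 1 v₁ U₁ → ContDiffOn ℝ 1 v₂ U₂ →
      -- v₁ vanishes on ∂Ω₁ \ Γ
      (∀ y ∈ Icc (0:ℝ) 1, v₁ (0, y) = 0) →
      (∀ x ∈ Icc (0:ℝ) 1, v₁ (x, 0) = 0) →
      (∀ x ∈ Icc (0:ℝ) 1, v₁ (x, 1) = 0) →
      -- v₂ vanishes on ∂Ω₂ \ Γ
      (∀ y ∈ Icc (0:ℝ) 1, v₂ (2, y) = 0) →
      (∀ x ∈ Icc (1:ℝ) 2, v₂ (x, 0) = 0) →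
      (∀ x ∈ Icc (1:ℝ) 2, v₂ (x, 1) = 0) →
      c₁ * (∫ z in Ω₁, g₁ z * v₁ z)
        + (∫ z in Ω₁, β₁ z * (pd1 u₁ z * pd1 v₁ z + pd2 u₁ z * pd2 v₁ z))
        + c₂ * (∫ z in Ω₂, g₂ z * v₂ z)
        + (∫ z in Ω₂, β₂ z * (pd1 u₂ z * pd1 v₂ z + pd2 u₂ z * pd2 v₂ z))
      = (∫ z in Ω₁, f₁ z * v₁ z) + (∫ z in Ω₂, f₂ z * v₂ z)
        + (∫ y in (0:ℝ)..1, β₂ (1, y) * pd1 u₂ (1, y) * v₁ (1, y))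
        - (∫ y in (0:ℝ)..1, β₁ (1, y) * pd1 u₁ (1, y) * v₂ (1, y)) := by
  intro v₁ v₂ hv₁ hv₂ hv₁_left hv₁_bot hv₁_top hv₂_right hv₂_bot hv₂_top
  subst hΩ₁ hΩ₂
  rw [closure_prod_eq, closure_Ioo zero_ne_one] at hU₁Ω
  rw [closure_prod_eq, closure_Ioo (by norm_num : (1:ℝ) ≠ 2), closure_Ioo zero_ne_one] at hU₂Ω
  have h₁ := weak_identity_of_classical_solution c₁ zero_le_one zero_le_one hU₁ hU₁Ω hβ₁ hu₁
    hv₁ hf₁ hg₁ hPDE₁ hv₁_bot hv₁_top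
  have h₂ := weak_identity_of_classical_solution c₂ one_le_two zero_le_one hU₂ hU₂Ω hβ₂ hu₂
    hv₂ hf₂ hg₂ hPDE₂ hv₂_bot hv₂_top
  have hleft₁ : ∫ y in (0:ℝ)..1, β₁ (0, y) * pd1 u₁ (0, y) * v₁ (0, y) = 0 :=
    intervalIntegral_eq_zero_of_forall_Icc zero_le_one fun y hy => by
      rw [hv₁_left y hy, mul_zero]
  have hright₂ : ∫ y in (0:ℝ)..1, β₂ (2, y) * pd1 u₂ (2, y) * v₂ (2, y) = 0 :=
    intervalIntegral_eq_zero_of_forall_Icc zero_le_one fun y hy => by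
      rw [hv₂_right y hy, mul_zero]
  have hΓ₁ : ∫ y in (0:ℝ)..1, β₁ (1, y) * pd1 u₁ (1, y) * v₁ (1, y)
      = ∫ y in (0:ℝ)..1, β₂ (1, y) * pd1 u₂ (1, y) * v₁ (1, y) :=
    intervalIntegral.integral_congr fun y hy => by
      rw [hNeu y (by rwa [uIcc_of_le zero_le_one] at hy)]
  have hΓ₂ : ∫ y in (0:ℝ)..1, β₂ (1, y) * pd1 u₂ (1, y) * v₂ (1, y)
      = ∫ y in (0:ℝ)..1, β₁ (1, y) * pd1 u₁ (1, y) * v₂ (1, y) :=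
    intervalIntegral.integral_congr fun y hy => by
      rw [← hNeu y (by rwa [uIcc_of_le zero_le_one] at hy)]
  linarith

/-- A classical solution of the coupled two-domain heat model satisfies the quasi-weak
formulation Problem EC (equation (4.1)): with `Ω₁ = (0,1)×(0,1)`, `Ω₂ = (1,2)×(0,1)`,
`Γ = {1}×[0,1]`, densities `c₁, c₂ > 0`, classical solutions `u₁, u₂` of
`cᵢ gᵢ − div(βᵢ∇uᵢ) = fᵢ` on `Ωᵢ` satisfying the Neumann interface condition, and any
C¹ test functions `v₁, v₂` vanishing on `∂Ωᵢ \ Γ` (with no matching condition on `Γ`),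
the quasi-weak identity with the two interface flux terms holds. -/
theorem classical_solution_satisfies_ProblemEC
    (Ω₁ Ω₂ : Set (ℝ × ℝ))
    (hΩ₁ : Ω₁ = Ioo (0:ℝ) 1 ×ˢ Ioo (0:ℝ) 1)
    (hΩ₂ : Ω₂ = Ioo (1:ℝ) 2 ×ˢ Ioo (0:ℝ) 1)
    (c₁ c₂ : ℝ) (hc₁ : 0 < c₁) (hc₂ : 0 < c₂)
    (β₁ β₂ f₁ f₂ g₁ g₂ u₁ u₂ : ℝ × ℝ → ℝ)
    (U₁ U₂ : Set (ℝ × ℝ))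
    (hU₁ : IsOpen U₁) (hU₁Ω : closure Ω₁ ⊆ U₁)
    (hU₂ : IsOpen U₂) (hU₂Ω : closure Ω₂ ⊆ U₂)
    (hβ₁ : ContDiffOn ℝ 1 β₁ U₁) (hβ₂ : ContDiffOn ℝ 1 β₂ U₂)
    (hf₁ : ContinuousOn f₁ U₁) (hf₂ : ContinuousOn f₂ U₂)
    (hg₁ : ContinuousOn g₁ U₁) (hg₂ : ContinuousOn g₂ U₂)
    (hu₁ : ContDiffOn ℝ 2 u₁ U₁) (hu₂ : ContDiffOn ℝ 2 u₂ U₂)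
    -- the PDEs in the two subdomains
    (hPDE₁ : ∀ z ∈ Ω₁, c₁ * g₁ z - divGrad β₁ u₁ z = f₁ z)
    (hPDE₂ : ∀ z ∈ Ω₂, c₂ * g₂ z - divGrad β₂ u₂ z = f₂ z)
    -- the Neumann interface condition β₁∇u₁·n₁ + β₂∇u₂·n₂ = 0 on Γ
    (hNeu : ∀ y ∈ Icc (0:ℝ) 1, β₁ (1, y) * pd1 u₁ (1, y) = β₂ (1, y) * pd1 u₂ (1, y)) :
    ∀ v₁ v₂ : ℝ × ℝ → ℝ,
      ContDiffOn ℝ 1 v₁ U₁ → ContDiffOn ℝ 1 v₂ U₂ →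
      -- v₁ vanishes on ∂Ω₁ \ Γ
      (∀ y ∈ Icc (0:ℝ) 1, v₁ (0, y) = 0) →
      (∀ x ∈ Icc (0:ℝ) 1, v₁ (x, 0) = 0) →
      (∀ x ∈ Icc (0:ℝ) 1, v₁ (x, 1) = 0) →
      -- v₂ vanishes on ∂Ω₂ \ Γ
      (∀ y ∈ Icc (0:ℝ) 1, v₂ (2, y) = 0) →
      (∀ x ∈ Icc (1:ℝ) 2, v₂ (x, 0) = 0) →
      (∀ x ∈ Icc (1:ℝ) 2, v₂ (x, 1) = 0) →
      c₁ * (∫ z in Ω₁, g₁ z * v₁ z)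
        + (∫ z in Ω₁, β₁ z * (pd1 u₁ z * pd1 v₁ z + pd2 u₁ z * pd2 v₁ z))
        + c₂ * (∫ z in Ω₂, g₂ z * v₂ z)
        + (∫ z in Ω₂, β₂ z * (pd1 u₂ z * pd1 v₂ z + pd2 u₂ z * pd2 v₂ z))
      = (∫ z in Ω₁, f₁ z * v₁ z) + (∫ z in Ω₂, f₂ z * v₂ z)
        + (∫ y in (0:ℝ)..1, β₂ (1, y) * pd1 u₂ (1, y) * v₁ (1, y))
        - (∫ y in (0:ℝ)..1, β₁ (1, y) * pd1 u₁ (1, y) * v₂ (1, y)) :=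
  classical_solution_satisfies_ProblemEC_general Ω₁ Ω₂ hΩ₁ hΩ₂ c₁ c₂ β₁ β₂ f₁ f₂ g₁ g₂ u₁ u₂ U₁ U₂
    hU₁ hU₁Ω hU₂ hU₂Ω hβ₁ hβ₂ hf₁ hf₂ hg₁ hg₂ hu₁ hu₂ hPDE₁ hPDE₂ hNeu
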